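/- arXiv:2203.03090 — 3 statements merged into one kernel-verified Lean document; each statement's English description precedes it below -/
import Mathlib

section
/- Let X be a regular scheme, J = (x_1^{1/w_1},...,x_k^{1/w_k}) a regular weighted center with x_i part of a regular system of parameters and w_i positive integers, and let B_+ be the cobordant blow-up of J, i.e., B = Spec_X(O_X[t^{-1}, x_1 t^{w_1},...,x_k t^{w_k}]) with the vertex V(x_1 t^{w_1},...,x_k t^{w_k}) removed. Then the pullback of the Q-ideal J to B_+ is the principal ideal generated by the global parameter t^{-1}: J · O_{B_+} = t^{-1} O_{B_+}. -/
open LaurentPolynomial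

/-- `u` is part of a regular system of parameters of the (regular) local ring `R`. -/
def IsPartialRegSystemOfParams {R : Type*} [CommRing R] [IsLocalRing R] {k : ℕ}
    (u : Fin k → R) : Prop :=
  ∃ (n : ℕ) (v : Fin n → R) (e : Fin k ↪ Fin n),
    (∀ i, v (e i) = u i) ∧
    Ideal.span (Set.range v) = IsLocalRing.maximalIdeal R ∧
    ringKrullDim R = n

/-- `f` belongs to the integral closure of the ideal `J`. -/
def MemIntegralClosureOfIdeal {R : Type*} [CommRing R] (J : Ideal R) (f : R) : Prop :=
  ∃ n : ℕ, 0 < n ∧ ∃ c : Fin n → R, (∀ i : Fin n, c i ∈ J ^ ((i : ℕ) + 1)) ∧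
    f ^ n + ∑ i, c i * f ^ (n - 1 - (i : ℕ)) = 0

/-- The coordinate ring `O_B = O_X[t⁻¹, x₁ t^{w₁},…,x_k t^{w_k}]` of the full cobordant
blow-up of the weighted center `(x₁^{1/w₁},…,x_k^{1/w_k})`. -/
noncomputable def cobordantAlgebra {R : Type*} [CommRing R] {k : ℕ}
    (x : Fin k → R) (w : Fin k → ℕ) : Subalgebra R (LaurentPolynomial R) :=
  Algebra.adjoin R (insert (T (-1)) (Set.range fun i => C (x i) * T (w i)))

private lemma x_eq_e_mul_tau {R : Type*} [CommRing R] {k : ℕ}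
    (x : Fin k → R) (w : Fin k → ℕ)
    (e : Fin k → cobordantAlgebra x w)
    (he : ∀ j, (e j : LaurentPolynomial R) = C (x j) * T (w j))
    (τ : cobordantAlgebra x w) (hτ : (τ : LaurentPolynomial R) = T (-1)) (j : Fin k) :
    algebraMap R (cobordantAlgebra x w) (x j) = e j * τ ^ (w j) := by
  apply Subtype.ext
  push_cast [he, hτ, T_pow]
  rw [LaurentPolynomial.algebraMap_apply, mul_assoc, ← T_add]
  simp

set_option synthInstance.maxHeartbeats 800000 in
/-- Let `J = (x₁^{1/w₁},…,x_k^{1/w_k})` be a regular weighted center on a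
regular (local) ring and `B₊` the cobordant blow-up, i.e. the complement of the vertex
`V(x₁ t^{w₁},…,x_k t^{w_k})` in `B = Spec O_X[t⁻¹, x₁ t^{w₁},…,x_k t^{w_k}]`.  Then the
pullback of the `Q`-ideal `J` to `B₊` is the principal ideal generated by `t⁻¹`: on every
chart `(O_B)_{x_i t^{w_i}}` of `B₊` and for every `N` divisible by all the weights, the
integral closure of the ideal generated by the pullbacks `x_j^{N/w_j}` coincides with the
integral closure of the ideal generated by `(t⁻¹)^N`. -/
theorem pullback_of_center_is_exceptional_divisor
    {R : Type*} [CommRing R] [IsLocalRing R] [IsNoetherianRing R] {k : ℕ}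
    (x : Fin k → R) (hx : IsPartialRegSystemOfParams x)
    (w : Fin k → ℕ) (hw : ∀ i, 0 < w i)
    (e : Fin k → cobordantAlgebra x w)
    (he : ∀ j, (e j : LaurentPolynomial R) = C (x j) * T (w j))
    (τ : cobordantAlgebra x w) (hτ : (τ : LaurentPolynomial R) = T (-1))
    (i : Fin k) (N : ℕ) (hN : 0 < N) (hNw : ∀ j, w j ∣ N) :
    {f : Localization.Away (e i) |
        MemIntegralClosureOfIdeal
          (Ideal.span (Set.range fun j =>
            algebraMap (cobordantAlgebra x w) (Localization.Away (e i))
              (algebraMap R (cobordantAlgebra x w) (x j)) ^ (N / w j)))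
          f} =
      {f : Localization.Away (e i) |
        MemIntegralClosureOfIdeal
          (Ideal.span {algebraMap (cobordantAlgebra x w) (Localization.Away (e i)) τ ^ N})
          f} := by
  have hgen : ∀ j, algebraMap (cobordantAlgebra x w) (Localization.Away (e i))
      (algebraMap R (cobordantAlgebra x w) (x j)) ^ (N / w j)
      = algebraMap (cobordantAlgebra x w) (Localization.Away (e i)) (e j) ^ (N / w j) *
        algebraMap (cobordantAlgebra x w) (Localization.Away (e i)) τ ^ N := by
    intro j
    rw [x_eq_e_mul_tau x w e he τ hτ j, map_mul, mul_pow, map_pow, ← pow_mul,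
      Nat.mul_div_cancel' (hNw j)]
  have hIdeal :
      Ideal.span (Set.range fun j =>
          algebraMap (cobordantAlgebra x w) (Localization.Away (e i))
            (algebraMap R (cobordantAlgebra x w) (x j)) ^ (N / w j)) =
        Ideal.span {algebraMap (cobordantAlgebra x w) (Localization.Away (e i)) τ ^ N} := by
    apply le_antisymm
    · rw [Ideal.span_le]
      rintro _ ⟨j, rfl⟩
      exact Ideal.mem_span_singleton.mpr
        ⟨algebraMap (cobordantAlgebra x w) (Localization.Away (e i)) (e j) ^ (N / w j),
          by dsimp only; rw [hgen j, mul_comm]⟩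
    · rw [Ideal.span_le, Set.singleton_subset_iff]
      have hu : IsUnit (algebraMap (cobordantAlgebra x w) (Localization.Away (e i)) (e i)) :=
        IsLocalization.Away.algebraMap_isUnit (e i)
      obtain ⟨v, hv⟩ := (hu.pow (N / w i)).exists_left_inv
      have hτN : algebraMap (cobordantAlgebra x w) (Localization.Away (e i)) τ ^ N =
          v * (algebraMap (cobordantAlgebra x w) (Localization.Away (e i))
            (algebraMap R (cobordantAlgebra x w) (x i)) ^ (N / w i)) := by
        rw [hgen i, ← mul_assoc, hv, one_mul]
      rw [hτN]
      exact Ideal.mul_mem_left _ v (Ideal.subset_span ⟨i, rfl⟩)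
  rw [hIdeal]
end

section
/- Let R = ⊕_{a∈Γ} R_a t^a be a rational Rees algebra on a regular scheme X and p ∈ X a point. If R ⊆ O_X[x_1 t^{1/a_1},...,x_k t^{1/a_k}]^{Int} with a_1 ≤ ... ≤ a_k (x_i part of a regular system of parameters at p), then ord_p(R) ≥ a_1, where ord_p(R) := min over a ∈ Γ \ {0} of ord_p(R_a)/a. Moreover, ord_p(R) = max{a ∈ Q : R ⊆ O_X[m_p t^{1/a}]^{Int}}. -/
/-- The degree-`b` graded piece of the integrally closed Rees center
`R[x₁ t^{1/a₁},…,x_k t^{1/a_k}]^{Int}`: the ideal generated by the monomials `x^c`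
with `∑ cᵢ/aᵢ ≥ b`. -/
def centerPiece {R : Type*} [CommRing R] {k : ℕ} (x : Fin k → R) (a : Fin k → ℚ)
    (b : ℚ) : Ideal R :=
  Ideal.span {y | ∃ c : Fin k → ℕ, b ≤ ∑ i, (c i : ℚ) / a i ∧ y = ∏ i, x i ^ c i}

private lemma prod_pow_mem_pow_sum {R : Type*} [CommRing R] (J : Ideal R) {k : ℕ}
    (x : Fin k → R) (hx : ∀ i, x i ∈ J) (c : Fin k → ℕ) (s : Finset (Fin k)) :
    ∏ i ∈ s, x i ^ c i ∈ J ^ (∑ i ∈ s, c i) := by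
  classical
  induction s using Finset.induction_on with
  | empty => simp
  | @insert i s hi ih =>
      rw [Finset.prod_insert hi, Finset.sum_insert hi, pow_add]
      exact Ideal.mul_mem_mul (Ideal.pow_mem_pow (hx i) _) ih

/-- Monomials of weighted degree ≥ b lie in `m^⌈a₀ b⌉` when all `aᵢ ≥ a₀`. -/
private lemma centerPiece_le {R : Type*} [CommRing R] [IsLocalRing R] {k : ℕ}
    (hk : 0 < k) (x : Fin k → R) (hxm : ∀ i, x i ∈ IsLocalRing.maximalIdeal R)
    (a : Fin k → ℚ) (ha : ∀ i, 0 < a i) (hmono : ∀ i j : Fin k, i ≤ j → a i ≤ a j)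
    (b : ℚ) :
    centerPiece x a b ≤ IsLocalRing.maximalIdeal R ^ (⌈a ⟨0, hk⟩ * b⌉.toNat) := by
  rw [centerPiece, Ideal.span_le]
  rintro y ⟨c, hc, rfl⟩
  set a0 := a ⟨0, hk⟩ with ha0
  have h1 : a0 * b ≤ (∑ i, (c i : ℚ)) := by
    have hsum : ∑ i, (c i : ℚ) / a i ≤ (∑ i, (c i : ℚ)) / a0 := by
      rw [Finset.sum_div]
      refine Finset.sum_le_sum fun i _ => ?_
      exact div_le_div_of_nonneg_left (by positivity) (ha _) (hmono ⟨0, hk⟩ i (by simp [Fin.le_def]))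
    have := hc.trans hsum
    calc a0 * b ≤ a0 * ((∑ i, (c i : ℚ)) / a0) := by
          exact mul_le_mul_of_nonneg_left this (ha _).le
      _ = ∑ i, (c i : ℚ) := mul_div_cancel₀ _ (ha _).ne'
  have h2 : ⌈a0 * b⌉.toNat ≤ ∑ i, c i := by
    have : ⌈a0 * b⌉ ≤ ((∑ i, c i : ℕ) : ℤ) := by
      refine Int.ceil_le.2 ?_
      push_cast
      exact h1
    omega
  have hmem : ∏ i, x i ^ c i ∈ IsLocalRing.maximalIdeal R ^ (∑ i, c i) :=
    prod_pow_mem_pow_sum _ x hxm c Finset.univ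
  exact Ideal.pow_le_pow_right h2 hmem

/-- Let `R = ⊕_{b ∈ Γ} R_b t^b` be a rational Rees algebra on a regular
(local) ring, given by the graded family of ideals `I b` for `b` in the subsemigroup
`Γ ⊆ ℚ_{≥0}`.  Let `o` be the order of `R` at the closed point `p`, i.e. the minimum over
`b ∈ Γ \ {0}` of `ord_p (I b) / b` (encoded by `holb` and `hoatt`).  If
`R ⊆ O_X[x₁ t^{1/a₁},…,x_k t^{1/a_k}]^{Int}` with `a₁ ≤ … ≤ a_k` — i.e. each `I b` lies
in the `b`-th graded piece of the integrally closed center — then `ord_p R ≥ a₁`.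
Moreover `ord_p R` is the greatest rational `q` with `R ⊆ O_X[m_p t^{1/q}]^{Int}`, i.e.
with `I b ⊆ m_p^{⌈q·b⌉}` for all `b ∈ Γ`, `b > 0`. -/
theorem order_of_rees_algebra
    {R : Type*} [CommRing R] [IsLocalRing R] [IsNoetherianRing R] {k : ℕ}
    (hk : 0 < k)
    (x : Fin k → R) (hx : IsPartialRegSystemOfParams x)
    (a : Fin k → ℚ) (ha : ∀ i, 0 < a i) (hmono : ∀ i j : Fin k, i ≤ j → a i ≤ a j)
    (Γ : Set ℚ) (hΓ0 : (0 : ℚ) ∈ Γ) (hΓnonneg : ∀ b ∈ Γ, 0 ≤ b)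
    (hΓadd : ∀ b ∈ Γ, ∀ b' ∈ Γ, b + b' ∈ Γ)
    (I : ℚ → Ideal R) (hI0 : I 0 = ⊤)
    (hImul : ∀ b ∈ Γ, ∀ b' ∈ Γ, I b * I b' ≤ I (b + b'))
    (hadm : ∀ b ∈ Γ, 0 < b → I b ≤ centerPiece x a b)
    (o : ℚ)
    (holb : ∀ b ∈ Γ, 0 < b →
      I b ≤ IsLocalRing.maximalIdeal R ^ (⌈o * b⌉.toNat))
    (hoatt : ∃ b ∈ Γ, 0 < b ∧ ∃ n : ℕ, (n : ℚ) = o * b ∧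
      ¬ I b ≤ IsLocalRing.maximalIdeal R ^ (n + 1)) :
    a ⟨0, hk⟩ ≤ o ∧
      IsGreatest {q : ℚ | ∀ b ∈ Γ, 0 < b →
        I b ≤ IsLocalRing.maximalIdeal R ^ (⌈q * b⌉.toNat)} o := by
  obtain ⟨b, hbΓ, hb, n, hn, hnot⟩ := hoatt
  -- the x i lie in the maximal ideal
  have hxm : ∀ i, x i ∈ IsLocalRing.maximalIdeal R := by
    obtain ⟨m, v, e, hve, hspan, -⟩ := hx
    intro i
    rw [← hve i, ← hspan]
    exact Ideal.subset_span ⟨e i, rfl⟩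
  -- key: for any r > o, I b is not contained in m^⌈r b⌉
  have key : ∀ r : ℚ, o < r → ¬ I b ≤ IsLocalRing.maximalIdeal R ^ (⌈r * b⌉.toNat) := by
    intro r hr hle
    apply hnot
    refine hle.trans (Ideal.pow_le_pow_right ?_)
    have h1 : (n : ℚ) < r * b := by
      rw [hn]; exact mul_lt_mul_of_pos_right hr hb
    have : (n : ℤ) < ⌈r * b⌉ := by
      have := h1.trans_le (Int.le_ceil (r * b))
      exact_mod_cast this
    omega
  constructor
  · by_contra h
    push_neg at h
    exact key _ h ((hadm b hbΓ hb).trans (centerPiece_le hk x hxm a ha hmono b))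
  · refine ⟨holb, fun q hq => ?_⟩
    by_contra h
    push_neg at h
    exact key q h (hq b hbΓ hb)
end

section
/- Let V be a regular scheme, X = A^n_V = Spec(O_V[x_1,...,x_n]), and J = (x_1^{1/w_1},...,x_k^{1/w_k}) a weighted center. Let I ⊆ O_V[x_1,...,x_n] be an ideal homogeneous with respect to the grading deg(x_i) = w_i for i ≤ k, deg(x_i) = 0 for i > k. Then the full cobordant blow-up B of X at J is isomorphic over V to Y = X × A^1 via x_i ↦ t^{w_i} x_i (i ≤ k), x_i ↦ x_i (i > k), y ↦ t^{-1}; and this isomorphism takes O_Y · I to the strict transform σ^s(I) and V(x_1,...,x_n) ⊂ Y to the vertex of B. -/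
/-!
Write `R = S[x₁,…,xₙ]`. Following `Φ` by the `S`-algebra endomorphism `xᵢ ↦ xᵢ t^{-wᵢ}`, `t ↦ t`
of `R[t,t⁻¹]` gives the evident embedding `S[x₁,…,xₙ,y] ≅ R[t⁻¹] ⊆ R[t,t⁻¹]`, so `Φ` is
injective; its image is `O_B` by construction.

A weighted homogeneous `g` of degree `m` goes to `g tᵐ`, so splitting `g ∈ I` into homogeneous
components shows `Φ(I·O_Y) ⊆ σˢ(I)`. Conversely, the `tᵈ`-coefficient of an element of `O_B` only
involves monomials of weight `≥ d`. If that coefficient lies in `I`, so do its weight-`m` parts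
`g_m`, and `g_m tᵈ = Φ(y^{m-d} g_m)`. As every element of `σˢ(I)` has all its coefficients in `I`,
this gives `σˢ(I) ⊆ Φ(I·O_Y)`.
-/

namespace LaurentPolynomial

theorem mem_map_C_iff {R : Type*} [CommRing R] {I : Ideal R} {f : R[T;T⁻¹]} :
    f ∈ I.map (C : R →+* R[T;T⁻¹]) ↔ ∀ n, f.coeff n ∈ I := by
  constructor
  · intro hf n
    have hker : I.map (C : R →+* R[T;T⁻¹]) ≤
        RingHom.ker (AddMonoidAlgebra.mapRingHom ℤ (Ideal.Quotient.mk I)) := by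
      refine Ideal.map_le_iff_le_comap.mpr fun g hg => ?_
      rw [Ideal.mem_comap, RingHom.mem_ker, ← single_eq_C, AddMonoidAlgebra.mapRingHom_single,
        Ideal.Quotient.eq_zero_iff_mem.mpr hg, AddMonoidAlgebra.single_zero]
    simpa [AddMonoidAlgebra.coeff_mapRingHom, Ideal.Quotient.eq_zero_iff_mem] using
      congrArg (·.coeff n) (RingHom.mem_ker.mp (hker hf))
  · intro hf
    rw [← AddMonoidAlgebra.sum_coeff_single f]
    refine Ideal.sum_mem _ fun n _ => ?_
    rw [single_eq_C_mul_T]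
    exact Ideal.mul_mem_right _ _ (Ideal.mem_map_of_mem _ (hf n))

end LaurentPolynomial

namespace CobordantBlowup

open LaurentPolynomial
open MvPolynomial hiding C

section Twist

variable {S σ : Type*} [CommRing S] (w : σ → ℕ)

noncomputable def twist : MvPolynomial σ S →ₐ[S] (MvPolynomial σ S)[T;T⁻¹] :=
  aeval fun i => C (X i) * T (w i)

theorem twist_monomial (α : σ →₀ ℕ) (c : S) :
    twist w (monomial α c) = C (monomial α c) * T (Finsupp.weight w α) := by
  induction α using Finsupp.induction with
  | zero => simp [twist, LaurentPolynomial.algebraMap_apply]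
  | single_add i k β _ _ ih =>
      rw [monomial_single_add, map_mul, map_pow, twist, aeval_X, ← twist, ih, mul_pow,
        ← map_pow, T_pow, mul_mul_mul_comm, ← map_mul, ← T_add, map_add, Finsupp.weight_single,
        smul_eq_mul]
      push_cast
      rfl

theorem twist_of_isWeightedHomogeneous {g : MvPolynomial σ S} {m : ℕ}
    (hg : g.IsWeightedHomogeneous w m) : twist w g = C g * T m := by
  conv_lhs => rw [← support_sum_monomial_coeff g]
  rw [map_sum,
    Finset.sum_congr rfl fun α hα => by rw [twist_monomial, hg (mem_support_iff.mp hα)],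
    ← Finset.sum_mul, ← map_sum, support_sum_monomial_coeff]

theorem weightedHomogeneousComponent_eq_zero_of_lt {c : MvPolynomial σ S} {d : ℤ}
    (hc : ∀ α ∈ c.support, d ≤ Finsupp.weight w α) {m : ℕ} (hm : (m : ℤ) < d) :
    weightedHomogeneousComponent w m c = 0 :=
  weightedHomogeneousComponent_eq_zero' m c fun α hα h => by
    have := hc α hα
    omega

noncomputable def untwist :
    (MvPolynomial σ S)[T;T⁻¹] →ₐ[S] (MvPolynomial σ S)[T;T⁻¹] :=
  AddMonoidAlgebra.liftNCAlgHom (aeval fun i => C (X i) * T (-(w i : ℤ)))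
    (AddMonoidAlgebra.of _ ℤ) fun _ _ => Commute.all _ _

theorem untwist_C_mul_T (r : MvPolynomial σ S) (d : ℤ) :
    untwist w (C r * T d) = aeval (fun i => C (X i) * T (-(w i : ℤ))) r * T d := by
  rw [← single_eq_C_mul_T, untwist, AddMonoidAlgebra.coe_liftNCAlgHom,
    AddMonoidAlgebra.liftNC_single, AddMonoidAlgebra.of_apply]
  rfl

theorem untwist_T (d : ℤ) : untwist (S := S) w (T d) = T d := by
  simpa only [map_one, one_mul] using untwist_C_mul_T w 1 d

end Twist

section Blowup

variable {S : Type*} [CommRing S] {n : ℕ} (w : Fin n → ℕ)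

variable (S) in
noncomputable abbrev blowupAlgebra : Subalgebra S (MvPolynomial (Fin n) S)[T;T⁻¹] :=
  Algebra.adjoin S (insert (T (-1)) (Set.range fun i => C (X i) * T (w i)))

noncomputable def blowupMap :
    MvPolynomial (Fin (n + 1)) S →ₐ[S] (MvPolynomial (Fin n) S)[T;T⁻¹] :=
  aeval (Fin.lastCases (T (-1)) fun i => C (X i) * T (w i))

@[simp]
theorem blowupMap_X_last : blowupMap (S := S) w (X (Fin.last n)) = T (-1) := by
  simp [blowupMap]

@[simp]
theorem blowupMap_X_castSucc (i : Fin n) :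
    blowupMap (S := S) w (X i.castSucc) = C (X i) * T (w i) := by
  simp [blowupMap]

theorem blowupMap_rename (g : MvPolynomial (Fin n) S) :
    blowupMap w (rename Fin.castSucc g) = twist w g := by
  rw [blowupMap, aeval_rename, twist]
  congr
  funext i
  simp

theorem range_blowupMap : (blowupMap w).range = blowupAlgebra S w := by
  rw [blowupMap, aeval_range]
  congr 1
  ext f
  simp [Fin.exists_fin_succ', or_comm, eq_comm]

theorem untwist_comp_blowupMap :
    (untwist w).comp (blowupMap w) =
      aeval (Fin.lastCases (T (-1)) fun i => C (X i : MvPolynomial (Fin n) S)) := by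
  refine algHom_ext fun j => ?_
  cases j using Fin.lastCases with
  | last =>
      rw [AlgHom.comp_apply, blowupMap_X_last, untwist_T, aeval_X, Fin.lastCases_last]
  | cast i =>
      rw [AlgHom.comp_apply, blowupMap_X_castSucc, untwist_C_mul_T, aeval_X, aeval_X,
        Fin.lastCases_castSucc, mul_assoc, ← T_add, neg_add_cancel, T_zero, mul_one]

theorem aeval_lastCases_injective :
    Function.Injective
      (aeval (R := S) (Fin.lastCases (T (-1)) fun i => C (X i : MvPolynomial (Fin n) S))) := by
  have h : (aeval (R := S) (Fin.lastCases (T (-1)) fun i => C (X i))).toRingHom =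
      invert.toRingHom.comp (Polynomial.toLaurent.comp
        ((optionEquivLeft S (Fin n)).toRingHom.comp
          (renameEquiv S finSuccEquivLast).toRingHom)) := by
    refine MvPolynomial.ringHom_ext (fun s => ?_) fun j => ?_
    · simp [LaurentPolynomial.algebraMap_apply]
    · cases j using Fin.lastCases <;>
        simp [finSuccEquivLast_castSucc, optionEquivLeft_X_some, optionEquivLeft_X_none]
  rw [← AlgHom.coe_toRingHom, ← AlgHom.toRingHom_eq_coe, h]
  exact invert.injective.comp (Polynomial.toLaurent_injective.comp
    ((optionEquivLeft S (Fin n)).injective.comp (renameEquiv S finSuccEquivLast).injective))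

theorem blowupMap_injective : Function.Injective (blowupMap (S := S) w) := by
  have h := aeval_lastCases_injective (S := S) (n := n)
  rw [← untwist_comp_blowupMap w, AlgHom.coe_comp] at h
  exact h.of_comp

noncomputable def rescale : MvPolynomial (Fin n) S →ₐ[S] MvPolynomial (Fin (n + 1)) S :=
  aeval fun i => X i.castSucc * X (Fin.last n) ^ w i

theorem blowupMap_rescale (g : MvPolynomial (Fin n) S) : blowupMap w (rescale w g) = C g := by
  have h : (blowupMap w).comp (rescale w) =
      IsScalarTower.toAlgHom S (MvPolynomial (Fin n) S) (MvPolynomial (Fin n) S)[T;T⁻¹] := by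
    refine algHom_ext fun i => ?_
    rw [AlgHom.comp_apply, rescale, aeval_X, map_mul, map_pow, blowupMap_X_castSucc,
      blowupMap_X_last, T_pow, mul_assoc, ← T_add, mul_neg_one, add_neg_cancel, T_zero, mul_one,
      IsScalarTower.toAlgHom_apply, LaurentPolynomial.algebraMap_apply, Algebra.algebraMap_self,
      RingHom.id_apply]
  simpa [LaurentPolynomial.algebraMap_apply] using AlgHom.congr_fun h g

theorem le_weight_of_mem_support_coeff_blowupMap (p : MvPolynomial (Fin (n + 1)) S) {d : ℤ}
    {α : Fin n →₀ ℕ} (hα : α ∈ ((blowupMap w p).coeff d).support) :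
    d ≤ Finsupp.weight w α := by
  induction p using MvPolynomial.induction_on generalizing d α with
  | C s =>
      rw [← MvPolynomial.algebraMap_eq, AlgHom.commutes, LaurentPolynomial.algebraMap_apply,
        LaurentPolynomial.C_apply] at hα
      split_ifs at hα with hd
      · obtain rfl : α = 0 := by simpa using support_monomial_subset hα
        simp [hd]
      · simp at hα
  | add p q hp hq =>
      rw [map_add, AddMonoidAlgebra.coeff_add, Finsupp.add_apply] at hα
      exact (Finset.mem_union.mp (support_add hα)).elim hp hq
  | mul_X p j hp =>
      cases j using Fin.lastCases with
      | last =>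
          rw [map_mul, blowupMap_X_last, T, AddMonoidAlgebra.coeff_mul_single_apply, mul_one] at hα
          have := hp hα
          omega
      | cast i =>
          rw [map_mul, blowupMap_X_castSucc, ← single_eq_C_mul_T,
            AddMonoidAlgebra.coeff_mul_single_apply, support_mul_X] at hα
          obtain ⟨β, hβ, rfl⟩ := Finset.mem_map.mp hα
          have := hp hβ
          simp only [addRightEmbedding_apply, map_add, Finsupp.weight_single, smul_eq_mul,
            one_mul, Nat.cast_add]
          omega

theorem C_mul_T_mem_map_blowupMap {I : Ideal (MvPolynomial (Fin n) S)}
    (hI : ∀ f ∈ I, ∀ m : ℕ, weightedHomogeneousComponent w m f ∈ I)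
    {c : MvPolynomial (Fin n) S} (hc : c ∈ I) {d : ℤ}
    (hcd : ∀ α ∈ c.support, d ≤ Finsupp.weight w α) :
    C c * T d ∈ (I.map (rename Fin.castSucc)).toAddSubmonoid.map (blowupMap w) := by
  rw [← sum_weightedHomogeneousComponent w c]
  refine finsum_induction (fun g => C g * T d ∈ _) (by simp [zero_mem])
    (fun g g' hg hg' => by rw [map_add, add_mul]; exact add_mem hg hg') fun m => ?_
  by_cases hm : d ≤ m
  · refine ⟨X (Fin.last n) ^ (m - d).toNat *
        rename Fin.castSucc (weightedHomogeneousComponent w m c),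
      Ideal.mul_mem_left _ _ (Ideal.mem_map_of_mem _ (hI c hc m)), ?_⟩
    rw [map_mul, map_pow, blowupMap_X_last, blowupMap_rename,
      twist_of_isWeightedHomogeneous w (weightedHomogeneousComponent_isWeightedHomogeneous m c),
      T_pow, mul_left_comm, ← T_add]
    congr
    omega
  · simp [weightedHomogeneousComponent_eq_zero_of_lt w hcd (not_le.mp hm), zero_mem]

theorem mem_map_rename_of_blowupMap_mem_map_C {I : Ideal (MvPolynomial (Fin n) S)}
    (hI : ∀ f ∈ I, ∀ m : ℕ, weightedHomogeneousComponent w m f ∈ I)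
    {p : MvPolynomial (Fin (n + 1)) S} (hp : blowupMap w p ∈ I.map C) :
    p ∈ I.map (rename Fin.castSucc) := by
  have : blowupMap w p ∈ (I.map (rename Fin.castSucc)).toAddSubmonoid.map (blowupMap w) := by
    rw [← AddMonoidAlgebra.sum_coeff_single (blowupMap w p)]
    refine AddSubmonoid.sum_mem _ fun d _ => ?_
    rw [single_eq_C_mul_T]
    exact C_mul_T_mem_map_blowupMap w hI (mem_map_C_iff.mp hp d) fun α hα =>
      le_weight_of_mem_support_coeff_blowupMap w p hα
  obtain ⟨q, hq, hqp⟩ := AddSubmonoid.mem_map.mp this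
  exact blowupMap_injective w hqp ▸ hq

theorem coe_eq_blowupMap {B : Subalgebra S (MvPolynomial (Fin n) S)[T;T⁻¹]}
    {Φ : MvPolynomial (Fin (n + 1)) S →ₐ[S] B}
    (hx : ∀ i : Fin n,
      (Φ (X i.castSucc) : (MvPolynomial (Fin n) S)[T;T⁻¹]) = C (X i) * T (w i))
    (hy : (Φ (X (Fin.last n)) : (MvPolynomial (Fin n) S)[T;T⁻¹]) = T (-1))
    (p : MvPolynomial (Fin (n + 1)) S) :
    (Φ p : (MvPolynomial (Fin n) S)[T;T⁻¹]) = blowupMap w p := by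
  have : B.val.comp Φ = blowupMap w := algHom_ext fun j => by
    cases j using Fin.lastCases <;> simp [hx, hy]
  exact AlgHom.congr_fun this p

noncomputable def strictTransform (I : Ideal (MvPolynomial (Fin n) S)) :
    Ideal (blowupAlgebra S w) :=
  Ideal.span {x | ∃ (a : ℕ) (y : blowupAlgebra S w),
    y ∈ Ideal.span
      {z : blowupAlgebra S w | ∃ g ∈ I, (z : (MvPolynomial (Fin n) S)[T;T⁻¹]) = C g} ∧
    (x : (MvPolynomial (Fin n) S)[T;T⁻¹]) =
      T (a : ℤ) * (y : (MvPolynomial (Fin n) S)[T;T⁻¹])}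

variable {w} {Φ : MvPolynomial (Fin (n + 1)) S →ₐ[S] blowupAlgebra S w}

theorem bijective_of_coe_eq_blowupMap
    (hΦ : ∀ p, (Φ p : (MvPolynomial (Fin n) S)[T;T⁻¹]) = blowupMap w p) :
    Function.Bijective Φ := by
  refine ⟨fun p q h => blowupMap_injective w ?_, fun x => ?_⟩
  · rw [← hΦ, ← hΦ, h]
  · have hx : (x : (MvPolynomial (Fin n) S)[T;T⁻¹]) ∈ (blowupMap w).range := by
      rw [range_blowupMap]
      exact x.2
    obtain ⟨p, hp⟩ := (AlgHom.mem_range _).mp hx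
    exact ⟨p, Subtype.ext ((hΦ p).trans hp)⟩

variable {I : Ideal (MvPolynomial (Fin n) S)}

theorem map_map_rename_le_strictTransform
    (hΦ : ∀ p, (Φ p : (MvPolynomial (Fin n) S)[T;T⁻¹]) = blowupMap w p)
    (hI : ∀ f ∈ I, ∀ m : ℕ, weightedHomogeneousComponent w m f ∈ I) :
    (I.map (rename Fin.castSucc)).map Φ ≤ strictTransform w I := by
  refine Ideal.map_le_iff_le_comap.mpr (Ideal.map_le_iff_le_comap.mpr fun g hg => ?_)
  change Φ (rename Fin.castSucc g) ∈ strictTransform w I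
  rw [← sum_weightedHomogeneousComponent w g]
  refine finsum_induction (fun g => Φ (rename Fin.castSucc g) ∈ strictTransform w I)
    (by simp [zero_mem]) (fun g g' hg hg' => by rw [map_add, map_add]; exact add_mem hg hg')
    fun m => Ideal.subset_span ⟨m, Φ (rescale w (weightedHomogeneousComponent w m g)),
      Ideal.subset_span ⟨_, hI g hg m, by rw [hΦ, blowupMap_rescale]⟩, ?_⟩
  rw [hΦ, hΦ, blowupMap_rename, blowupMap_rescale, mul_comm,
    twist_of_isWeightedHomogeneous w (weightedHomogeneousComponent_isWeightedHomogeneous m g)]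

theorem strictTransform_le_map_map_rename
    (hΦ : ∀ p, (Φ p : (MvPolynomial (Fin n) S)[T;T⁻¹]) = blowupMap w p)
    (hI : ∀ f ∈ I, ∀ m : ℕ, weightedHomogeneousComponent w m f ∈ I) :
    strictTransform w I ≤ (I.map (rename Fin.castSucc)).map Φ := by
  refine Ideal.span_le.mpr ?_
  rintro x ⟨a, y, hy, hx⟩
  obtain ⟨p, rfl⟩ := (bijective_of_coe_eq_blowupMap hΦ).surjective x
  refine Ideal.mem_map_of_mem Φ (mem_map_rename_of_blowupMap_mem_map_C w hI ?_)
  have hyC : (y : (MvPolynomial (Fin n) S)[T;T⁻¹]) ∈ I.map C := by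
    refine (Ideal.span_le (I := (I.map C).comap (blowupAlgebra S w).val)).mpr ?_ hy
    rintro z ⟨g, hg, hz⟩
    rw [SetLike.mem_coe, Ideal.mem_comap, Subalgebra.coe_val, hz]
    exact Ideal.mem_map_of_mem C hg
  rw [← hΦ, hx]
  exact Ideal.mul_mem_left _ _ hyC

end Blowup

end CobordantBlowup

open LaurentPolynomial MvPolynomial

set_option synthInstance.maxHeartbeats 1000000 in
/-- Let `V` be a (regular) affine base, `X = 𝔸ⁿ_V` with coordinate ring
`P = O_V[x₁,…,xₙ]`, and `J = (x₁^{1/w₁},…,xₙ^{1/wₙ})` a weighted center.  Let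
`I ⊆ P` be an ideal which is homogeneous for the grading `deg xᵢ = wᵢ`.  Then the full
cobordant blow-up `B`, with coordinate ring
`O_B = O_V[t⁻¹, x₁ t^{w₁},…,xₙ t^{wₙ}] ⊆ P[t,t⁻¹]`, is isomorphic over `V` to
`Y = X × 𝔸¹`, via the `O_V`-algebra map `Φ` with `Φ(xᵢ) = xᵢ t^{wᵢ}` and `Φ(y) = t⁻¹`:
`Φ` is bijective, it carries `O_Y·I` onto the strict transform
`σˢ(I) = ({tᵃ f ∈ O_B : f ∈ O_B·I, a ≥ 0})`, and it carries the ideal of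
`V(x₁,…,xₙ) ⊆ Y` onto the ideal of the vertex `V(x₁t^{w₁},…,xₙt^{wₙ})` of `B`. -/
theorem homogeneous_cobordant_blowup_trivializes
    {S : Type*} [CommRing S] (n : ℕ) (w : Fin n → ℕ)
    (I : Ideal (MvPolynomial (Fin n) S))
    (hhom : ∀ f ∈ I, ∀ m : ℕ, weightedHomogeneousComponent w m f ∈ I)
    (OB : Subalgebra S (LaurentPolynomial (MvPolynomial (Fin n) S)))
    (hOB : OB = Algebra.adjoin S
      (insert (T (-1))
        (Set.range fun i : Fin n => LaurentPolynomial.C (X i : MvPolynomial (Fin n) S) * T (w i))))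
    (Φ : MvPolynomial (Fin (n + 1)) S →ₐ[S] OB)
    (hΦx : ∀ i : Fin n, (Φ (X i.castSucc) : LaurentPolynomial (MvPolynomial (Fin n) S)) =
      LaurentPolynomial.C (X i : MvPolynomial (Fin n) S) * T (w i))
    (hΦy : (Φ (X (Fin.last n)) : LaurentPolynomial (MvPolynomial (Fin n) S)) = T (-1)) :
    Function.Bijective Φ ∧
    Ideal.map Φ (Ideal.map (rename (Fin.castSucc : Fin n → Fin (n + 1))) I) =
      Ideal.span {x : OB | ∃ (a : ℕ) (y : OB),
        y ∈ Ideal.span {z : OB | ∃ g ∈ I,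
          (z : LaurentPolynomial (MvPolynomial (Fin n) S)) = LaurentPolynomial.C g} ∧
        (x : LaurentPolynomial (MvPolynomial (Fin n) S)) =
          T (a : ℤ) * (y : LaurentPolynomial (MvPolynomial (Fin n) S))} ∧
    Ideal.map Φ (Ideal.span (Set.range fun i : Fin n =>
        (X i.castSucc : MvPolynomial (Fin (n + 1)) S))) =
      Ideal.span {x : OB | ∃ i : Fin n,
        (x : LaurentPolynomial (MvPolynomial (Fin n) S)) =
          LaurentPolynomial.C (X i : MvPolynomial (Fin n) S) * T (w i)} := by
  subst hOB
  have hΦ := CobordantBlowup.coe_eq_blowupMap w hΦx hΦy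
  refine ⟨CobordantBlowup.bijective_of_coe_eq_blowupMap hΦ,
    le_antisymm (CobordantBlowup.map_map_rename_le_strictTransform hΦ hhom)
      (CobordantBlowup.strictTransform_le_map_map_rename hΦ hhom), ?_⟩
  rw [Ideal.map_span, ← Set.range_comp]
  congr 1
  ext x
  simp [Subtype.ext_iff, hΦx, eq_comm]
end
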